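/- arXiv:2209.11679 — 4 statements merged into one kernel-verified Lean document; each statement's English description precedes it below -/
import Mathlib

section
/- Let U and I be nonempty finite sets, Δ : U × I → ℝ with Δ_{ui} ≠ 0 for all (u,i), β ∈ ℝ and γ > 0. Then there exists a constant c ∈ ℝ (depending only on Δ, β, γ, |U|, |I|) such that for every function s : U × I → ℝ, the loss L(s) = Σ_{u∈U} Σ_{i∈I} (Δ_{ui}²/exp(s_{ui}) + β·s_{ui} + γ·s_{ui}²) satisfies L(s) ≥ Σ_{u∈U} KL(p_u || q_u^s) + c, where p_u(i) = Δ_{ui}²/K_u with K_u = Σ_{j∈I} Δ_{uj}², q_u^s(i) = exp(s_{ui})/R_u(s) with R_u(s) = Σ_{j∈I} exp(s_{uj}), and KL(p_u || q_u^s) = Σ_{i∈I} p_u(i)·ln(p_u(i)/q_u^s(i)). -/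
/-!
Per user, write `T = ∑ᵢ |sᵢ|` and `n = |I|`. Since `pᵢ log pᵢ ≤ 0` and `Σ pᵢ ≤ 1`, the KL term is
at most `maxᵢ (-log qᵢ) ≤ log n + 2T`: the softmax probabilities satisfy `qᵢ ≥ e^{-T} / (n e^{T})`.
On the other side, dropping the nonnegative term `Δ²/eˢ`, the quadratic `βs + γs²` with `γ > 0`
dominates `2|s|` up to the constant `(|β| + 2)² / (4γ)`, so the loss is at least `2T` minus a constant.
-/

open Real Finset

lemma two_mul_abs_sub_le_mul_add_mul_sq {γ : ℝ} (hγ : 0 < γ) (β x : ℝ) :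
    2 * |x| - (|β| + 2) ^ 2 / (4 * γ) ≤ β * x + γ * x ^ 2 := by
  have hβx : -(|β| * |x|) ≤ β * x := by rw [← abs_mul]; exact neg_abs_le _
  have hsq : 0 ≤ (2 * γ * |x| - (|β| + 2)) ^ 2 / (4 * γ) := by positivity
  have hexpand : (2 * γ * |x| - (|β| + 2)) ^ 2 / (4 * γ)
      = γ * x ^ 2 - (|β| + 2) * |x| + (|β| + 2) ^ 2 / (4 * γ) := by
    field_simp
    rw [← sq_abs x]
    ring
  linarith

lemma mul_log_div_le_mul_neg_log {p q : ℝ} (hp : 0 ≤ p) (hp1 : p ≤ 1) (hq : 0 < q) :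
    p * log (p / q) ≤ p * -log q := by
  rcases hp.eq_or_lt with rfl | hp
  · simp
  rw [log_div hp.ne' hq.ne']
  nlinarith [log_nonpos hp.le hp1]

lemma sum_mul_log_div_le {ι : Type*} [Fintype ι] {p q : ι → ℝ} {M : ℝ}
    (hp : ∀ i, 0 ≤ p i) (hp1 : ∑ i, p i ≤ 1) (hq : ∀ i, 0 < q i) (hM : 0 ≤ M)
    (hqM : ∀ i, -log (q i) ≤ M) :
    ∑ i, p i * log (p i / q i) ≤ M := by
  have hp_le_one (i : ι) : p i ≤ 1 :=
    (single_le_sum (fun j _ => hp j) (mem_univ i)).trans hp1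
  calc ∑ i, p i * log (p i / q i)
      ≤ ∑ i, p i * M := sum_le_sum fun i _ =>
        (mul_log_div_le_mul_neg_log (hp i) (hp_le_one i) (hq i)).trans
          (mul_le_mul_of_nonneg_left (hqM i) (hp i))
    _ = (∑ i, p i) * M := by rw [sum_mul]
    _ ≤ M := mul_le_of_le_one_left hM hp1

lemma neg_log_softmax_le {ι : Type*} [Fintype ι] (s : ι → ℝ) (i : ι) :
    -log (exp (s i) / ∑ j, exp (s j)) ≤ log (Fintype.card ι) + 2 * ∑ j, |s j| := by
  set T := ∑ j, |s j|
  have habs_le (j : ι) : |s j| ≤ T := single_le_sum (fun k _ => abs_nonneg (s k)) (mem_univ j)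
  have hR : 0 < ∑ j, exp (s j) := sum_pos (fun j _ => exp_pos _) ⟨i, mem_univ i⟩
  have hRle : ∑ j, exp (s j) ≤ Fintype.card ι * exp T := by
    simpa using sum_le_card_nsmul univ (fun j => exp (s j)) (exp T)
      fun j _ => exp_le_exp.2 ((le_abs_self _).trans (habs_le j))
  have hlogR : log (∑ j, exp (s j)) ≤ log (Fintype.card ι) + T := by
    have hn : (0 : ℝ) < Fintype.card ι := Nat.cast_pos.2 (Fintype.card_pos_iff.2 ⟨i⟩)
    calc log (∑ j, exp (s j)) ≤ log (Fintype.card ι * exp T) := log_le_log hR hRle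
      _ = log (Fintype.card ι) + T := by rw [log_mul hn.ne' (exp_pos T).ne', log_exp]
  rw [log_div (exp_pos _).ne' hR.ne', log_exp]
  linarith [neg_abs_le (s i), habs_le i]

lemma sum_loss_ge_two_mul_sum_abs {ι : Type*} [Fintype ι] (d s : ι → ℝ) (β : ℝ) {γ : ℝ}
    (hγ : 0 < γ) :
    2 * ∑ i, |s i| - Fintype.card ι * ((|β| + 2) ^ 2 / (4 * γ))
      ≤ ∑ i, (d i ^ 2 / exp (s i) + β * s i + γ * s i ^ 2) := by
  have hterm (i : ι) : 2 * |s i| - (|β| + 2) ^ 2 / (4 * γ)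
      ≤ d i ^ 2 / exp (s i) + β * s i + γ * s i ^ 2 := by
    have : 0 ≤ d i ^ 2 / exp (s i) := by positivity
    linarith [two_mul_abs_sub_le_mul_add_mul_sq hγ β (s i)]
  calc 2 * ∑ i, |s i| - Fintype.card ι * ((|β| + 2) ^ 2 / (4 * γ))
      = ∑ i, (2 * |s i| - (|β| + 2) ^ 2 / (4 * γ)) := by
        rw [sum_sub_distrib, mul_sum, sum_const, card_univ, nsmul_eq_mul]
    _ ≤ _ := sum_le_sum fun i _ => hterm i

lemma kl_le_loss_add {ι : Type*} [Fintype ι] (d s : ι → ℝ) (β : ℝ) {γ : ℝ} (hγ : 0 < γ) :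
    ∑ i, (d i ^ 2 / ∑ j, d j ^ 2) *
        log ((d i ^ 2 / ∑ j, d j ^ 2) / (exp (s i) / ∑ j, exp (s j)))
      ≤ ∑ i, (d i ^ 2 / exp (s i) + β * s i + γ * s i ^ 2)
        + (log (Fintype.card ι) + Fintype.card ι * ((|β| + 2) ^ 2 / (4 * γ))) := by
  have hkl := sum_mul_log_div_le (p := fun i => d i ^ 2 / ∑ j, d j ^ 2)
    (q := fun i => exp (s i) / ∑ j, exp (s j)) (fun i => by positivity)
    (by simpa only [← sum_div] using div_self_le_one _)
    (fun i => div_pos (exp_pos _) (sum_pos (fun j _ => exp_pos _) ⟨i, mem_univ i⟩))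
    (by positivity) (neg_log_softmax_le s)
  linarith [sum_loss_ge_two_mul_sum_abs d s β hγ]

theorem stmt_0_general {U I : Type*} [Fintype U] [Fintype I]
    (Δ : U → I → ℝ) (β γ : ℝ) (hγ : 0 < γ) :
    ∃ c : ℝ, ∀ s : U → I → ℝ,
      (∑ u : U, ∑ i : I,
          ((Δ u i) ^ 2 / Real.exp (s u i) + β * s u i + γ * (s u i) ^ 2)) ≥
        (∑ u : U, ∑ i : I,
            ((Δ u i) ^ 2 / (∑ j : I, (Δ u j) ^ 2)) *
              Real.log (((Δ u i) ^ 2 / (∑ j : I, (Δ u j) ^ 2)) /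
                (Real.exp (s u i) / (∑ j : I, Real.exp (s u j))))) + c := by
  set B := log (Fintype.card I) + Fintype.card I * ((|β| + 2) ^ 2 / (4 * γ))
  refine ⟨-(Fintype.card U * B), fun s => ?_⟩
  have hsum := sum_le_sum fun u (_ : u ∈ univ) => kl_le_loss_add (Δ u) (s u) β hγ
  rw [sum_add_distrib, sum_const, card_univ, nsmul_eq_mul] at hsum
  linarith

/-- Theorem 1 of the paper (all weights equal to 1): the uncertainty-estimator loss
is bounded below by the sum over users of the KL-divergences plus a constant. -/
theorem stmt_0 {U I : Type*} [Fintype U] [Fintype I] [Nonempty U] [Nonempty I]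
    (Δ : U → I → ℝ) (hΔ : ∀ u i, Δ u i ≠ 0) (β γ : ℝ) (hγ : 0 < γ) :
    ∃ c : ℝ, ∀ s : U → I → ℝ,
      (∑ u : U, ∑ i : I,
          ((Δ u i) ^ 2 / Real.exp (s u i) + β * s u i + γ * (s u i) ^ 2)) ≥
        (∑ u : U, ∑ i : I,
            ((Δ u i) ^ 2 / (∑ j : I, (Δ u j) ^ 2)) *
              Real.log (((Δ u i) ^ 2 / (∑ j : I, (Δ u j) ^ 2)) /
                (Real.exp (s u i) / (∑ j : I, Real.exp (s u j))))) + c :=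
  stmt_0_general Δ β γ hγ
end

section
/- Let U and I be nonempty finite sets, Δ : U × I → ℝ with Δ_{ui} ≠ 0 for all (u,i), β ∈ ℝ and γ > 0. For every function s : U × I → ℝ, the loss L(s) = Σ_{u∈U} Σ_{i∈I} (Δ_{ui}²/exp(s_{ui}) + β·s_{ui} + γ·s_{ui}²) satisfies L(s) ≥ Σ_{u∈U} KL(p_u || q_u^s) + Σ_{u∈U} Σ_{i∈I} (β·s_{ui} + γ·s_{ui}²) − Σ_{u∈U} ln R_u(s) + c₁, where K_u = Σ_{j∈I} Δ_{uj}², R_u(s) = Σ_{j∈I} exp(s_{uj}), p_u(i) = Δ_{ui}²/K_u, q_u^s(i) = exp(s_{ui})/R_u(s), KL(p_u || q_u^s) = Σ_{i∈I} p_u(i)·ln(p_u(i)/q_u^s(i)), and c₁ = Σ_{u∈U} (2·ln K_u + 1) − Σ_{u∈U} Σ_{i∈I} p_u(i)·ln(Δ_{ui}²). -/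
lemma per_u_aux {I : Type*} [Fintype I] [Nonempty I] (d e : I → ℝ)
    (hd : ∀ i, 0 < d i) :
    (∑ i, (d i / ∑ j, d j) *
        Real.log ((d i / ∑ j, d j) / (Real.exp (e i) / ∑ j, Real.exp (e j))))
      - Real.log (∑ j, Real.exp (e j)) + (2 * Real.log (∑ j, d j) + 1)
      - ∑ i, (d i / ∑ j, d j) * Real.log (d i)
    ≤ ∑ i, d i / Real.exp (e i) := by
  set K := ∑ j, d j with hKdef
  set R := ∑ j, Real.exp (e j) with hRdef
  have hK : 0 < K := Finset.sum_pos (fun i _ => hd i) Finset.univ_nonempty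
  have hR : 0 < R := Finset.sum_pos (fun i _ => Real.exp_pos _) Finset.univ_nonempty
  have hlog : ∀ i, Real.log ((d i / K) / (Real.exp (e i) / R))
      = Real.log (d i) - Real.log K - e i + Real.log R := by
    intro i
    rw [Real.log_div (div_pos (hd i) hK).ne' (div_pos (Real.exp_pos _) hR).ne', Real.log_div (hd i).ne' hK.ne',
        Real.log_div (Real.exp_pos _).ne' hR.ne', Real.log_exp]
    ring
  have hsum1 : (∑ i, d i / K) = 1 := by
    rw [← Finset.sum_div, div_self hK.ne']
  have key : (∑ i, (d i / K) * Real.log ((d i / K) / (Real.exp (e i) / R)))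
      - Real.log R + (2 * Real.log K + 1) - ∑ i, (d i / K) * Real.log (d i)
      = ∑ i, (d i / K) * (Real.log K + 1 - e i) := by
    have hc : ∀ i ∈ Finset.univ, (d i / K) * Real.log ((d i / K) / (Real.exp (e i) / R))
        = (d i / K) * Real.log (d i) + (d i / K) * (Real.log R - Real.log K)
          - (d i / K) * e i := by
      intro i _; rw [hlog i]; ring
    rw [Finset.sum_congr rfl hc]
    have hc2 : ∀ i ∈ Finset.univ, (d i / K) * (Real.log K + 1 - e i)
        = (d i / K) * (Real.log K + 1) - (d i / K) * e i := by
      intro i _; ring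
    rw [Finset.sum_congr rfl hc2, Finset.sum_sub_distrib, Finset.sum_sub_distrib,
        Finset.sum_add_distrib, ← Finset.sum_mul, ← Finset.sum_mul, hsum1]
    ring
  rw [key]
  apply Finset.sum_le_sum
  intro i _
  have hx : Real.log (K / Real.exp (e i)) ≤ K / Real.exp (e i) - 1 :=
    Real.log_le_sub_one_of_pos (div_pos hK (Real.exp_pos _))
  have hlx : Real.log (K / Real.exp (e i)) = Real.log K - e i := by
    rw [Real.log_div hK.ne' (Real.exp_pos _).ne', Real.log_exp]
  have h3 : Real.log K + 1 - e i ≤ K / Real.exp (e i) := by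
    rw [hlx] at hx; linarith
  calc (d i / K) * (Real.log K + 1 - e i) ≤ (d i / K) * (K / Real.exp (e i)) :=
        mul_le_mul_of_nonneg_left h3 (div_pos (hd i) hK).le
    _ = d i / Real.exp (e i) := by field_simp

/-- The intermediate inequality (Equation 21) in the proof of Theorem 1 of the paper. -/
theorem stmt_2 {U I : Type*} [Fintype U] [Fintype I] [Nonempty U] [Nonempty I]
    (Δ : U → I → ℝ) (hΔ : ∀ u i, Δ u i ≠ 0) (β γ : ℝ) (hγ : 0 < γ) :
    ∀ s : U → I → ℝ,
      (∑ u : U, ∑ i : I,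
          ((Δ u i) ^ 2 / Real.exp (s u i) + β * s u i + γ * (s u i) ^ 2)) ≥
        (∑ u : U, ∑ i : I,
            ((Δ u i) ^ 2 / (∑ j : I, (Δ u j) ^ 2)) *
              Real.log (((Δ u i) ^ 2 / (∑ j : I, (Δ u j) ^ 2)) /
                (Real.exp (s u i) / (∑ j : I, Real.exp (s u j))))) +
          (∑ u : U, ∑ i : I, (β * s u i + γ * (s u i) ^ 2)) -
          (∑ u : U, Real.log (∑ j : I, Real.exp (s u j))) +
          ((∑ u : U, (2 * Real.log (∑ j : I, (Δ u j) ^ 2) + 1)) -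
            ∑ u : U, ∑ i : I,
              ((Δ u i) ^ 2 / (∑ j : I, (Δ u j) ^ 2)) * Real.log ((Δ u i) ^ 2)) := by
  intro s
  rw [ge_iff_le]
  have hper : ∀ u : U,
      (∑ i : I, ((Δ u i) ^ 2 / (∑ j : I, (Δ u j) ^ 2)) *
          Real.log (((Δ u i) ^ 2 / (∑ j : I, (Δ u j) ^ 2)) /
            (Real.exp (s u i) / (∑ j : I, Real.exp (s u j)))))
        - Real.log (∑ j : I, Real.exp (s u j))
        + (2 * Real.log (∑ j : I, (Δ u j) ^ 2) + 1)
        - ∑ i : I, ((Δ u i) ^ 2 / (∑ j : I, (Δ u j) ^ 2)) * Real.log ((Δ u i) ^ 2)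
      ≤ ∑ i : I, (Δ u i) ^ 2 / Real.exp (s u i) := by
    intro u
    exact per_u_aux (fun i => (Δ u i) ^ 2) (s u) (fun i => by have := hΔ u i; positivity)
  have h1 : (∑ u : U, ∑ i : I,
      ((Δ u i) ^ 2 / Real.exp (s u i) + β * s u i + γ * (s u i) ^ 2))
      = (∑ u : U, ∑ i : I, (Δ u i) ^ 2 / Real.exp (s u i))
        + ∑ u : U, ∑ i : I, (β * s u i + γ * (s u i) ^ 2) := by
    rw [← Finset.sum_add_distrib]
    apply Finset.sum_congr rfl
    intro u _
    rw [← Finset.sum_add_distrib]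
    apply Finset.sum_congr rfl
    intro i _; ring
  have h2 : (∑ u : U, ∑ i : I,
            ((Δ u i) ^ 2 / (∑ j : I, (Δ u j) ^ 2)) *
              Real.log (((Δ u i) ^ 2 / (∑ j : I, (Δ u j) ^ 2)) /
                (Real.exp (s u i) / (∑ j : I, Real.exp (s u j))))) +
          (∑ u : U, ∑ i : I, (β * s u i + γ * (s u i) ^ 2)) -
          (∑ u : U, Real.log (∑ j : I, Real.exp (s u j))) +
          ((∑ u : U, (2 * Real.log (∑ j : I, (Δ u j) ^ 2) + 1)) -
            ∑ u : U, ∑ i : I,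
              ((Δ u i) ^ 2 / (∑ j : I, (Δ u j) ^ 2)) * Real.log ((Δ u i) ^ 2))
      = (∑ u : U,
          ((∑ i : I, ((Δ u i) ^ 2 / (∑ j : I, (Δ u j) ^ 2)) *
              Real.log (((Δ u i) ^ 2 / (∑ j : I, (Δ u j) ^ 2)) /
                (Real.exp (s u i) / (∑ j : I, Real.exp (s u j)))))
            - Real.log (∑ j : I, Real.exp (s u j))
            + (2 * Real.log (∑ j : I, (Δ u j) ^ 2) + 1)
            - ∑ i : I, ((Δ u i) ^ 2 / (∑ j : I, (Δ u j) ^ 2)) * Real.log ((Δ u i) ^ 2)))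
        + ∑ u : U, ∑ i : I, (β * s u i + γ * (s u i) ^ 2) := by
    simp only [Finset.sum_sub_distrib, Finset.sum_add_distrib]
    ring
  rw [h1, h2]
  exact add_le_add_left (Finset.sum_le_sum fun u _ => hper u) _
end

section
/- Let n ≥ 1 be a natural number, β ∈ ℝ, γ > 0, and s : {1,…,n} → ℝ. Then Σ_{i=1}^n (β·s_i + γ·s_i²) − ln( Σ_{i=1}^n exp(s_i) ) ≥ −(n−1)·β²/(4γ) − (β−1)²/(4γ) − ln n. -/
/-!
Bound the log-sum-exp by its largest term: `log ∑ exp sᵢ ≤ s_k + log n`, where `s_k = max s`.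
Subtracting `s_k` just turns the `k`-th summand into `(β - 1) s_k + γ s_k²`, and every summand
`a t + γ t²` is at least its minimum `-a² / (4γ)`.
-/

open Finset Real

lemma neg_sq_div_le_mul_add_mul_sq {γ : ℝ} (hγ : 0 < γ) (a t : ℝ) :
    -a ^ 2 / (4 * γ) ≤ a * t + γ * t ^ 2 := by
  rw [div_le_iff₀ (by positivity)]
  nlinarith [sq_nonneg (2 * γ * t + a)]

lemma log_sum_exp_le {ι : Type*} {t : Finset ι} (ht : t.Nonempty) {f : ι → ℝ} {M : ℝ}
    (hf : ∀ i ∈ t, f i ≤ M) : log (∑ i ∈ t, exp (f i)) ≤ M + log #t := by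
  have hsum : ∑ i ∈ t, exp (f i) ≤ #t * exp M := by
    simpa using sum_le_card_nsmul t _ _ fun i hi => exp_le_exp.mpr (hf i hi)
  calc log (∑ i ∈ t, exp (f i)) ≤ log (#t * exp M) :=
        log_le_log (sum_pos (fun i _ => exp_pos _) ht) hsum
    _ = M + log #t := by
        rw [log_mul (by simpa using ht.ne_empty) (exp_ne_zero M), log_exp, add_comm]

lemma le_sum_mul_add_mul_sq_sub_apply {ι : Type*} [DecidableEq ι] {t : Finset ι} {k : ι}
    (hk : k ∈ t) (β : ℝ) {γ : ℝ} (hγ : 0 < γ) (f : ι → ℝ) :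
    -((#t : ℝ) - 1) * β ^ 2 / (4 * γ) - (β - 1) ^ 2 / (4 * γ) ≤
      ∑ i ∈ t, (β * f i + γ * f i ^ 2) - f k := by
  have hrest : -((#t : ℝ) - 1) * β ^ 2 / (4 * γ) ≤
      ∑ i ∈ t.erase k, (β * f i + γ * f i ^ 2) := by
    have := card_nsmul_le_sum (t.erase k) _ _ fun i _ => neg_sq_div_le_mul_add_mul_sq hγ β (f i)
    rw [card_erase_of_mem hk, nsmul_eq_mul, Nat.cast_pred (card_pos.mpr ⟨k, hk⟩)] at this
    linarith [show -((#t : ℝ) - 1) * β ^ 2 / (4 * γ) = (#t - 1) * (-β ^ 2 / (4 * γ)) by ring]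
  have hmax := neg_sq_div_le_mul_add_mul_sq hγ (β - 1) (f k)
  rw [← add_sum_erase t _ hk]
  linarith [show -(β - 1) ^ 2 / (4 * γ) = -((β - 1) ^ 2 / (4 * γ)) by ring]

/-- The (corrected) lower bound for the second term in the RHS of inequality (21)
in the proof of Theorem 1 of the paper. -/
theorem stmt_4 (n : ℕ) (hn : 1 ≤ n) (β γ : ℝ) (hγ : 0 < γ) (s : Fin n → ℝ) :
    (∑ i : Fin n, (β * s i + γ * (s i) ^ 2)) -
        Real.log (∑ i : Fin n, Real.exp (s i)) ≥
      -((n : ℝ) - 1) * β ^ 2 / (4 * γ) - (β - 1) ^ 2 / (4 * γ) - Real.log n := by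
  have hne : (univ : Finset (Fin n)).Nonempty := univ_nonempty_iff.mpr (Fin.pos_iff_nonempty.mp hn)
  obtain ⟨k, -, hk⟩ := univ.exists_max_image s hne
  have hlog : log (∑ i, exp (s i)) ≤ s k + log n := by
    simpa using log_sum_exp_le hne fun i _ => hk i (mem_univ i)
  have hquad := le_sum_mul_add_mul_sq_sub_apply (mem_univ k) β hγ s
  rw [card_univ, Fintype.card_fin] at hquad
  linarith
end

section
/- Let U and I be nonempty finite sets, Δ : U × I → ℝ with Δ_{ui} ≠ 0 for all (u,i), w : U × I → ℝ with w_{ui} > 0 for all (u,i), β ∈ ℝ and γ > 0. Then there exists a constant c ∈ ℝ (depending only on Δ, w, β, γ, |U|, |I|) such that for every function s : U × I → ℝ, the weighted loss L_w(s) = Σ_{u∈U} Σ_{i∈I} w_{ui}·(Δ_{ui}²/exp(s_{ui}) + β·s_{ui} + γ·s_{ui}²) satisfies L_w(s) ≥ Σ_{u∈U} KL(p̃_u || q_u^s) + c, where p̃_u(i) = w_{ui}·Δ_{ui}²/K̃_u with K̃_u = Σ_{j∈I} w_{uj}·Δ_{uj}², q_u^s(i) = exp(s_{ui})/R_u(s)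 with R_u(s) = Σ_{j∈I} exp(s_{uj}), and KL(p̃_u || q_u^s) = Σ_{i∈I} p̃_u(i)·ln(p̃_u(i)/q_u^s(i)). -/
/-!
Writing `p` for the normalized weighted squared residuals of a user, the Kullback–Leibler term
splits as `∑ p log p - ∑ p s + log ∑ exp s`. Since `p` is a sub-probability vector, the last two
terms are at most `log |I| + 2 ∑ |s|`, and the loss dominates `2 ∑ |s|` up to a constant because
each summand is a quadratic in `s` with positive leading coefficient `w γ`.
-/

open Finset Real

lemma neg_sq_div_le_mul_add_mul_sq_sub_mul_abs {b c k x : ℝ} (hc : 0 < c) :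
    -((|b| + k) ^ 2 / (4 * c)) ≤ b * x + c * x ^ 2 - k * |x| := by
  have hbx : -(|b| * |x|) ≤ b * x := by simpa only [abs_mul] using neg_abs_le (b * x)
  have hsq : -((|b| + k) ^ 2 / (4 * c)) ≤ c * |x| ^ 2 - (|b| + k) * |x| := by
    rw [neg_le_iff_add_nonneg', div_add' _ _ _ (by positivity)]
    exact div_nonneg (by nlinarith [sq_nonneg (2 * c * |x| - (|b| + k))]) (by positivity)
  rw [sq_abs] at hsq
  linarith

lemma log_sum_exp_le_log_card_add_sum_abs {ι : Type*} [Fintype ι] [Nonempty ι] (s : ι → ℝ) :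
    log (∑ i, exp (s i)) ≤ log (Fintype.card ι) + ∑ i, |s i| := by
  have hle : ∑ i, exp (s i) ≤ Fintype.card ι * exp (∑ j, |s j|) := by
    rw [← nsmul_eq_mul, ← card_univ, ← sum_const]
    gcongr with i
    exact (le_abs_self _).trans (single_le_sum (fun j _ => abs_nonneg (s j)) (mem_univ i))
  calc log (∑ i, exp (s i))
      ≤ log (Fintype.card ι * exp (∑ j, |s j|)) := log_le_log (by positivity) hle
    _ = log (Fintype.card ι) + ∑ i, |s i| := by
      rw [log_mul (by positivity) (exp_pos _).ne', log_exp]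

lemma mul_log_div_exp_div (p s : ℝ) {R : ℝ} (hR : 0 < R) :
    p * log (p / (exp s / R)) = p * log p - p * s + p * log R := by
  rcases eq_or_ne p 0 with rfl | hp
  · simp
  rw [log_div hp (div_pos (exp_pos s) hR).ne', log_div (exp_pos s).ne' hR.ne', log_exp]
  ring

lemma sum_mul_log_div_softmax_le {ι : Type*} [Fintype ι] [Nonempty ι] (p s : ι → ℝ)
    (hp : ∀ i, 0 ≤ p i) (hp_sum : ∑ i, p i ≤ 1) :
    ∑ i, p i * log (p i / (exp (s i) / ∑ j, exp (s j))) ≤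
      ∑ i, p i * log (p i) + log (Fintype.card ι) + 2 * ∑ i, |s i| := by
  set B := log (Fintype.card ι) + ∑ i, |s i|
  have hR : 0 < ∑ j, exp (s j) := by positivity
  have hB : 0 ≤ B := add_nonneg (log_natCast_nonneg _) (sum_nonneg fun i _ => abs_nonneg _)
  have hp_le : ∀ i, p i ≤ 1 := fun i =>
    (single_le_sum (fun j _ => hp j) (mem_univ i)).trans hp_sum
  have hps : ∀ i, -(p i * s i) ≤ |s i| := fun i =>
    calc -(p i * s i) ≤ |p i * s i| := neg_le_abs _
      _ = p i * |s i| := by rw [abs_mul, abs_of_nonneg (hp i)]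
      _ ≤ |s i| := mul_le_of_le_one_left (abs_nonneg _) (hp_le i)
  have hlogR : (∑ i, p i) * log (∑ j, exp (s j)) ≤ B :=
    calc (∑ i, p i) * log (∑ j, exp (s j))
        ≤ (∑ i, p i) * B :=
          mul_le_mul_of_nonneg_left (log_sum_exp_le_log_card_add_sum_abs s)
            (sum_nonneg fun i _ => hp i)
      _ ≤ B := mul_le_of_le_one_left hB hp_sum
  have hlin : -∑ i, p i * s i ≤ ∑ i, |s i| := by
    simpa only [sum_neg_distrib] using sum_le_sum fun i _ => hps i
  rw [sum_congr rfl fun i _ => mul_log_div_exp_div (p i) (s i) hR, sum_add_distrib,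
    sum_sub_distrib, ← sum_mul]
  linarith

lemma weighted_loss_term_ge {w γ : ℝ} (β Δ s : ℝ) (hw : 0 < w) (hγ : 0 < γ) :
    -((|w * β| + 2) ^ 2 / (4 * (w * γ))) + 2 * |s| ≤
      w * (Δ ^ 2 / exp s + β * s + γ * s ^ 2) := by
  have hquad := neg_sq_div_le_mul_add_mul_sq_sub_mul_abs (b := w * β) (k := 2) (x := s)
    (mul_pos hw hγ)
  have hdata : 0 ≤ w * (Δ ^ 2 / exp s) := by positivity
  linarith

theorem stmt_6_general {U I : Type*} [Fintype U] [Fintype I] [Nonempty I]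
    (Δ : U → I → ℝ)
    (w : U → I → ℝ) (hw : ∀ u i, 0 < w u i) (β γ : ℝ) (hγ : 0 < γ) :
    ∃ c : ℝ, ∀ s : U → I → ℝ,
      (∑ u : U, ∑ i : I,
          w u i * ((Δ u i) ^ 2 / Real.exp (s u i) + β * s u i + γ * (s u i) ^ 2)) ≥
        (∑ u : U, ∑ i : I,
            (w u i * (Δ u i) ^ 2 / (∑ j : I, w u j * (Δ u j) ^ 2)) *
              Real.log ((w u i * (Δ u i) ^ 2 / (∑ j : I, w u j * (Δ u j) ^ 2)) /
                (Real.exp (s u i) / (∑ j : I, Real.exp (s u j))))) + c := by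
  set p : U → I → ℝ := fun u i => w u i * Δ u i ^ 2 / ∑ j, w u j * Δ u j ^ 2
  have hwΔ : ∀ u i, 0 ≤ w u i * Δ u i ^ 2 := fun u i => mul_nonneg (hw u i).le (sq_nonneg _)
  have hp : ∀ u i, 0 ≤ p u i := fun u i => div_nonneg (hwΔ u i) (sum_nonneg fun j _ => hwΔ u j)
  have hp_sum : ∀ u, ∑ i, p u i ≤ 1 := fun u => by
    simpa only [p, ← sum_div] using div_self_le_one _
  refine ⟨∑ u, (∑ i, -((|w u i * β| + 2) ^ 2 / (4 * (w u i * γ))) - ∑ i, p u i * log (p u i)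
    - log (Fintype.card I)), fun s => ?_⟩
  rw [ge_iff_le, ← sum_add_distrib]
  gcongr with u
  have hKL := sum_mul_log_div_softmax_le (p u) (s u) (hp u) (hp_sum u)
  have hloss := sum_le_sum (s := univ) fun i _ =>
    weighted_loss_term_ge β (Δ u i) (s u i) (hw u i) hγ
  rw [sum_add_distrib, ← mul_sum] at hloss
  simp only [p] at hKL ⊢
  linarith

/-- The weighted generalization of Theorem 1 of the paper. -/
theorem stmt_6 {U I : Type*} [Fintype U] [Fintype I] [Nonempty U] [Nonempty I]
    (Δ : U → I → ℝ) (hΔ : ∀ u i, Δ u i ≠ 0)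
    (w : U → I → ℝ) (hw : ∀ u i, 0 < w u i) (β γ : ℝ) (hγ : 0 < γ) :
    ∃ c : ℝ, ∀ s : U → I → ℝ,
      (∑ u : U, ∑ i : I,
          w u i * ((Δ u i) ^ 2 / Real.exp (s u i) + β * s u i + γ * (s u i) ^ 2)) ≥
        (∑ u : U, ∑ i : I,
            (w u i * (Δ u i) ^ 2 / (∑ j : I, w u j * (Δ u j) ^ 2)) *
              Real.log ((w u i * (Δ u i) ^ 2 / (∑ j : I, w u j * (Δ u j) ^ 2)) /
                (Real.exp (s u i) / (∑ j : I, Real.exp (s u j))))) + c :=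
  stmt_6_general Δ w hw β γ hγ
end
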